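/- Let p ≥ 5 be a prime and n a positive integer, and let X_1, …, X_p ⊆ 𝔽_p^n be such that every cycle (x_1, …, x_p) ∈ X_1 × ⋯ × X_p satisfies x_1 = x_2. Let ℳ be a collection of L pairwise disjoint cycles in X_1 × ⋯ × X_p. Then there exists a subcollection ℳ' ⊆ ℳ of size |ℳ'| ≥ L²/(2p^{n+1}) such that for any two distinct cycles (x_1, …, x_p), (x_1', …, x_p') ∈ ℳ' and any j ∈ {3, …, p}, the pair (x_1, x_j') is not j-extendable. -/

import Mathlib

/-!
If `(y, z)` and `(y', z')` are `j`-extendable with `y + z = y' + z'`, then `y = y'`: splicing the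
entries at positions `1` and `j` of a cycle witnessing the first pair into a cycle witnessing the
second gives again a cycle; its first entry is `y`, and its second entry is that of the second
cycle, which equals `y'`. As the cycles of `ℳ` are
disjoint, each of them is determined by any one of its entries, so for each `j` at most `p^n`
ordered pairs of cycles of `ℳ` are in conflict through `j`. The conflict graph on `ℳ` therefore has
`N = L` vertices and `E ≤ (p - 2) p^n` edges, and Turán's theorem, in the form `α ≥ N² / (N + 2E)`,
provides an independent set of the required size.
-/

open Finset Fintype

namespace SimpleGraph

theorem cliqueFree_compl_indepNum_add_one {V : Type*} [Finite V] (G : SimpleGraph V) :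
    Gᶜ.CliqueFree (G.indepNum + 1) := by
  rw [cliqueFree_compl]
  intro t ht
  have := ht.isIndepSet.card_le_indepNum
  rw [ht.card_eq] at this
  omega

variable {V : Type*} [Fintype V] {G : SimpleGraph V} [DecidableRel G.Adj]

theorem CliqueFree.two_mul_mul_card_edgeFinset_le {r : ℕ} (h : G.CliqueFree (r + 1)) :
    2 * r * #G.edgeFinset ≤ (r - 1) * card V ^ 2 := by
  rcases r.eq_zero_or_pos with rfl | hr
  · simp
  obtain ⟨H, _, hH⟩ := exists_isTuranMaximal (V := V) hr
  calc 2 * r * #G.edgeFinset ≤ 2 * r * #H.edgeFinset := Nat.mul_le_mul_left _ (hH.2 h)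
    _ = 2 * r * #(turanGraph (card V) r).edgeFinset := by
      rw [((isTuranMaximal_iff_nonempty_iso_turanGraph hr).mp hH).some.card_edgeFinset_eq]
    _ ≤ (r - 1) * card V ^ 2 := mul_card_edgeFinset_turanGraph_le

theorem card_edgeFinset_fromRel_le (r : V → V → Prop) [DecidableRel r]
    [DecidableRel (fromRel r).Adj] : #(fromRel r).edgeFinset ≤ #{q : V × V | r q.1 q.2} := by
  refine card_le_card_of_surjOn (fun q => s(q.1, q.2)) ?_
  intro e he
  induction e using Sym2.ind with | _ a b => ?_
  obtain ⟨-, hab | hba⟩ := (mem_edgeFinset.1 he : (fromRel r).Adj a b)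
  · exact ⟨(a, b), by simpa using hab, rfl⟩
  · exact ⟨(b, a), by simpa using hba, Sym2.eq_swap⟩

variable [DecidableEq V]

theorem card_edgeFinset_add_card_edgeFinset_compl :
    #G.edgeFinset + #Gᶜ.edgeFinset = (card V).choose 2 := by
  rw [← card_union_of_disjoint (disjoint_edgeFinset.2 disjoint_compl_right), ← edgeFinset_sup,
    ← card_edgeFinset_top_eq_card_choose_two]
  congr! 2
  exact sup_compl_eq_top

variable (G) in
/-- Turán's theorem applied to the complement, which has no clique of size `α(G) + 1`. -/
theorem card_sq_le_indepNum_mul :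
    card V ^ 2 ≤ G.indepNum * (card V + 2 * #G.edgeFinset) := by
  cases isEmpty_or_nonempty V
  · simp
  obtain ⟨v⟩ := ‹Nonempty V›
  have hpos : 1 ≤ G.indepNum := by
    simpa using (show G.IsIndepSet ({v} : Finset V) by simp).card_le_indepNum
  have hturan := G.cliqueFree_compl_indepNum_add_one.two_mul_mul_card_edgeFinset_le
  have hsum := G.card_edgeFinset_add_card_edgeFinset_compl
  qify [hpos] at hturan hsum ⊢
  rw [Nat.cast_choose_two] at hsum
  nlinarith

end SimpleGraph

theorem eq_of_apply_eq_apply {ι G : Type*} {M : Finset (ι → G)}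
    (hM : ∀ c ∈ M, ∀ c' ∈ M, c ≠ c' → ∀ k k', c k ≠ c' k') {c c' : ι → G} (hc : c ∈ M)
    (hc' : c' ∈ M) {k k' : ι} (h : c k = c' k') : c = c' :=
  by_contra (fun hne => hM c hc c' hc' hne k k' h)

theorem card_le_card_of_apply_ne {ι G : Type*} [Fintype G] {M : Finset (ι → G)}
    (hM : ∀ c ∈ M, ∀ c' ∈ M, c ≠ c' → ∀ k k', c k ≠ c' k') (k : ι) : #M ≤ card G :=
  (card_le_card_of_injOn (t := univ) (· k) (fun _ _ => mem_coe.2 (mem_univ _))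
    fun _ hc _ hc' h => eq_of_apply_eq_apply hM hc hc' h).trans_eq card_univ

section Cycles
variable {ι G : Type*} [Fintype ι] [DecidableEq ι] [AddCommGroup G]

def Extendable (X : ι → Set G) (i j : ι) (a b : G) : Prop :=
  ∃ w : ι → G, (∀ k, w k ∈ X k) ∧ ∑ k, w k = 0 ∧ w i = a ∧ w j = b

variable {X : ι → Set G} {i i' j : ι}

theorem Extendable.eq_of_add_eq
    (hX : ∀ x : ι → G, (∀ k, x k ∈ X k) → ∑ k, x k = 0 → x i = x i')
    (hij : i ≠ j) (hi'i : i' ≠ i) (hi'j : i' ≠ j) {a b a' b' : G}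
    (h : Extendable X i j a b) (h' : Extendable X i j a' b') (hsum : a + b = a' + b') :
    a = a' := by
  obtain ⟨w, hwX, -, rfl, rfl⟩ := h
  obtain ⟨v, hvX, hv, rfl, rfl⟩ := h'
  set z := ({i, j} : Finset ι).piecewise w v
  have hzX : ∀ k, z k ∈ X k := by
    intro k
    by_cases hk : k ∈ ({i, j} : Finset ι) <;> simp [z, hk, hwX, hvX]
  have hz : ∑ k, z k = 0 := by
    rw [sum_piecewise, univ_inter, sum_sdiff_eq_sub (subset_univ _), sum_pair hij, sum_pair hij,
      hv, hsum, zero_sub, add_neg_cancel]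
  calc w i = z i := by simp [z]
    _ = z i' := hX z hzX hz
    _ = v i' := by simp [z, hi'i, hi'j]
    _ = v i := (hX v hvX hv).symm

section Conflict
variable [Fintype G] (X : ι → Set G) (i : ι) (J : Finset ι) (M : Finset (ι → G))

def conflictGraph : SimpleGraph M :=
  SimpleGraph.fromRel fun c c' => ∃ j ∈ J, Extendable X i j (c.1 i) (c'.1 j)

variable {X i J M}

open scoped Classical in
theorem card_extendable_pairs_le
    (hX : ∀ x : ι → G, (∀ k, x k ∈ X k) → ∑ k, x k = 0 → x i = x i')
    (hij : i ≠ j) (hi'i : i' ≠ i) (hi'j : i' ≠ j)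
    (hM : ∀ c ∈ M, ∀ c' ∈ M, c ≠ c' → ∀ k k', c k ≠ c' k') :
    #{q : M × M | Extendable X i j (q.1.1 i) (q.2.1 j)} ≤ card G := by
  refine (card_le_card_of_injOn (t := univ) (fun q => q.1.1 i + q.2.1 j)
    (fun _ _ => mem_coe.2 (mem_univ _)) ?_).trans_eq card_univ
  rintro ⟨c, c'⟩ hq ⟨e, e'⟩ hr hsum
  simp only [coe_filter, mem_univ, true_and, Set.mem_ofPred_eq] at hq hr hsum
  have hi : c.1 i = e.1 i := hq.eq_of_add_eq hX hij hi'i hi'j hr hsum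
  have hj : c'.1 j = e'.1 j := add_left_cancel (hi ▸ hsum)
  simp only [Prod.mk.injEq]
  exact ⟨Subtype.ext (eq_of_apply_eq_apply hM c.2 e.2 hi),
    Subtype.ext (eq_of_apply_eq_apply hM c'.2 e'.2 hj)⟩

open scoped Classical in
theorem card_edgeFinset_conflictGraph_le
    (hX : ∀ x : ι → G, (∀ k, x k ∈ X k) → ∑ k, x k = 0 → x i = x i') (hi'i : i' ≠ i)
    (hJ : ∀ j ∈ J, i ≠ j ∧ i' ≠ j) (hM : ∀ c ∈ M, ∀ c' ∈ M, c ≠ c' → ∀ k k', c k ≠ c' k') :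
    #(conflictGraph X i J M).edgeFinset ≤ #J * card G :=
  calc #(conflictGraph X i J M).edgeFinset
      ≤ #{q : M × M | ∃ j ∈ J, Extendable X i j (q.1.1 i) (q.2.1 j)} := by
        convert SimpleGraph.card_edgeFinset_fromRel_le
          (fun c c' : M => ∃ j ∈ J, Extendable X i j (c.1 i) (c'.1 j))
        rfl
    _ = #(J.biUnion fun j => {q : M × M | Extendable X i j (q.1.1 i) (q.2.1 j)}) := by
        congr 1; ext; simp
    _ ≤ ∑ j ∈ J, #{q : M × M | Extendable X i j (q.1.1 i) (q.2.1 j)} := card_biUnion_le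
    _ ≤ ∑ j ∈ J, card G := sum_le_sum fun j hj =>
        card_extendable_pairs_le hX (hJ j hj).1 hi'i (hJ j hj).2 hM
    _ = #J * card G := by rw [sum_const, smul_eq_mul]

theorem exists_subset_sq_card_le_and_not_extendable
    (hX : ∀ x : ι → G, (∀ k, x k ∈ X k) → ∑ k, x k = 0 → x i = x i') (hi'i : i' ≠ i)
    (hJ : ∀ j ∈ J, i ≠ j ∧ i' ≠ j) (hM : ∀ c ∈ M, ∀ c' ∈ M, c ≠ c' → ∀ k k', c k ≠ c' k') :
    ∃ M' ⊆ M, #M ^ 2 ≤ #M' * ((2 * #J + 1) * card G) ∧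
      ∀ c ∈ M', ∀ c' ∈ M', c ≠ c' → ∀ j ∈ J, ¬ Extendable X i j (c i) (c' j) := by
  classical
  obtain ⟨t, ht⟩ := (conflictGraph X i J M).exists_isNIndepSet_indepNum
  have hE := card_edgeFinset_conflictGraph_le hX hi'i hJ hM
  have hMG := card_le_card_of_apply_ne hM i
  refine ⟨t.map (.subtype _), fun c hc => ?_, ?_, ?_⟩
  · obtain ⟨a, -, rfl⟩ := mem_map.1 hc
    exact a.2
  · calc #M ^ 2 = Fintype.card M ^ 2 := by rw [card_coe]
      _ ≤ #t * (Fintype.card M + 2 * #(conflictGraph X i J M).edgeFinset) := by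
          rw [ht.card_eq]; exact SimpleGraph.card_sq_le_indepNum_mul _
      _ ≤ #(t.map (.subtype _)) * ((2 * #J + 1) * card G) := by
          rw [card_map, card_coe]; gcongr; nlinarith
  · simp only [mem_map, Function.Embedding.subtype_apply]
    rintro _ ⟨a, ha, rfl⟩ _ ⟨b, hb, rfl⟩ hne j hj hext
    have hab : a ≠ b := Subtype.coe_ne_coe.1 hne
    exact ht.isIndepSet ha hb hab ⟨hab, Or.inl ⟨j, hj, hext⟩⟩

end Conflict
end Cycles

/-- Suppose `X_1, …, X_p ⊆ 𝔽_p^n` are such that every cycle (p-tuple summing to zero)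
`(x_1, …, x_p) ∈ X_1 × ⋯ × X_p` satisfies `x_1 = x_2`, and let `ℳ` be a collection of `L`
pairwise disjoint cycles in `X_1 × ⋯ × X_p`. Then there is a subcollection `ℳ' ⊆ ℳ` of size
`|ℳ'| ≥ L²/(2p^{n+1})` such that for any two distinct cycles
`(x_1, …, x_p), (x_1', …, x_p') ∈ ℳ'` and any `j ∈ {3, …, p}`, the pair `(x_1, x_j')` is
not `j`-extendable (i.e. there is no cycle `(w_1, …, w_p) ∈ X_1 × ⋯ × X_p` with `w_1 = x_1`
and `w_j = x_j'`). -/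
theorem stmt10 {p n : ℕ} (hp5 : 5 ≤ p)
    (X : Fin p → Set (Fin n → ZMod p))
    (hX : ∀ x : Fin p → (Fin n → ZMod p), (∀ i, x i ∈ X i) → ∑ i, x i = 0 →
      x ⟨0, by omega⟩ = x ⟨1, by omega⟩)
    (L : ℕ) (M : Finset (Fin p → (Fin n → ZMod p))) (hML : M.card = L)
    (hMdisj : ∀ c ∈ M, ∀ c' ∈ M, c ≠ c' → ∀ i i', c i ≠ c' i') :
    ∃ M' ⊆ M, (L : ℝ) ^ 2 / (2 * (p : ℝ) ^ (n + 1)) ≤ M'.card ∧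
      ∀ c ∈ M', ∀ c' ∈ M', c ≠ c' → ∀ j : Fin p, 2 ≤ (j : ℕ) →
        ¬ ∃ w : Fin p → (Fin n → ZMod p), (∀ i, w i ∈ X i) ∧ ∑ i, w i = 0 ∧
          w ⟨0, by omega⟩ = c ⟨0, by omega⟩ ∧ w j = c' j := by
  have : NeZero p := ⟨by omega⟩
  obtain ⟨M', hM'M, hcard, hM'⟩ := exists_subset_sq_card_le_and_not_extendable
    (J := {j : Fin p | 2 ≤ (j : ℕ)}) hX (by simp [Fin.ext_iff])
    (fun j hj => by simp only [mem_filter, mem_univ, true_and] at hj; simp [Fin.ext_iff]; omega)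
    hMdisj
  refine ⟨M', hM'M, ?_, fun c hc c' hc' hne j hj => hM' c hc c' hc' hne j (by simpa using hj)⟩
  have hJ : #{j : Fin p | 2 ≤ (j : ℕ)} < p :=
    (card_lt_univ_of_notMem (x := ⟨0, by omega⟩) (by simp)).trans_eq (Fintype.card_fin p)
  have hL : L ^ 2 ≤ #M' * (2 * p ^ (n + 1)) := by
    rw [← hML]
    refine hcard.trans (Nat.mul_le_mul_left _ ?_)
    simp only [card_fun, ZMod.card, Fintype.card_fin, pow_succ]
    nlinarith [pow_pos (show 0 < p by omega) n]
  rw [div_le_iff₀ (by positivity)]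
  exact_mod_cast hL
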